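/- Let Ψ, Φ, Γ, Λ, Ξ, Π : ℝ → ℝ³ and Υ, Σ, Ω : ℝ → M₃(ℝ) be continuous functions. They satisfy, for all t, t' ∈ ℝ: Ψ_i(t+t') = Ψ_i(t) + Ψ_i(t'); Φ_i(t+t') = Φ_i(t) + Φ_i(t') − t Γ_i(t'); Γ_i(t+t') = Γ_i(t) + Γ_i(t'); Λ_i(t+t') = Λ_i(t) + Λ_i(t') − (1/2) t ε_{imn} Υ_{mn}(t') + t² Ξ_i(t'); Υ_{ij}(t+t') = Υ_{ij}(t) + Υ_{ij}(t') − 2 t ε_{ijl} Ξ_l(t'); Σ_{ij}(t+t') = Σ_{ij}(t) + Σ_{ij}(t') − t Ω_{ij}(t'); Ξ_i(t+t') = Ξ_i(t) + Ξ_i(t'); Ω_{ij}(t+t') = Ω_{ij}(t) + Ω_{ij}(t'); Π_i(t+t') = Π_i(t) + Π_i(t'), if and only if there exist constants p_i, r_i, s_i, u_i, w_i, m_i ∈ ℝ and matrices x, y, z ∈ M₃(ℝ) such that for all t: Ψ_i(t) = p_i t, Φ_i(t) = r_i t − (1/2) s_i t², Γ_i(t) = s_i t, Λ_i(t) = u_i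 t − (1/4) ε_{imn} x_{mn} t² + (1/3) w_i t³, Υ_{ij}(t) = x_{ij} t − ε_{ijk} w_k t², Σ_{ij}(t) = y_{ij} t − (1/2) z_{ij} t², Ξ_i(t) = w_i t, Ω_{ij}(t) = z_{ij} t, Π_i(t) = m_i t. -/
import Mathlib


/-- The Levi-Civita symbol on `{1,2,3}` (indexed by `Fin 3`). -/
def eps (i j k : Fin 3) : ℝ :=
  if (i, j, k) = (0, 1, 2) ∨ (i, j, k) = (1, 2, 0) ∨ (i, j, k) = (2, 0, 1) then 1
  else if (i, j, k) = (2, 1, 0) ∨ (i, j, k) = (1, 0, 2) ∨ (i, j, k) = (0, 2, 1) then -1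
  else 0

/-- A continuous additive function `ℝ → ℝ` is linear. -/
lemma cauchy_lin {f : ℝ → ℝ} (hc : Continuous f)
    (hf : ∀ t t' : ℝ, f (t + t') = f t + f t') : ∀ t, f t = f 1 * t := by
  have h0 : f 0 = 0 := by have := hf 0 0; simp at this; linarith
  let F : ℝ →+ ℝ := { toFun := f, map_zero' := h0, map_add' := hf }
  have hL := (F.toRealLinearMap hc).map_smul
  intro t
  have := hL t 1
  simpa [F, smul_eq_mul, mul_comm] using this

set_option maxRecDepth 2000
set_option maxHeartbeats 1600000

/-- The restriction of the Poisson–Lie cocycle condition on the Galilei group to the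
subgroup of time translations: continuous functions `Ψ, Φ, Γ, Λ, Ξ, Π : ℝ → ℝ³` and
`Υ, Σ, Ω : ℝ → M₃(ℝ)` satisfy the additive cocycle system iff they have the stated
polynomial form. -/
theorem time_translation_cocycles
    (Psi Phi Gam Lam Xi Piv : ℝ → Fin 3 → ℝ)
    (Ups Sig Om : ℝ → Fin 3 → Fin 3 → ℝ)
    (hPsi : Continuous Psi) (hPhi : Continuous Phi) (hGam : Continuous Gam)
    (hLam : Continuous Lam) (hXi : Continuous Xi) (hPiv : Continuous Piv)
    (hUps : Continuous Ups) (hSig : Continuous Sig) (hOm : Continuous Om) :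
    ((∀ t t' : ℝ, ∀ i, Psi (t + t') i = Psi t i + Psi t' i) ∧
     (∀ t t' : ℝ, ∀ i, Phi (t + t') i = Phi t i + Phi t' i - t * Gam t' i) ∧
     (∀ t t' : ℝ, ∀ i, Gam (t + t') i = Gam t i + Gam t' i) ∧
     (∀ t t' : ℝ, ∀ i, Lam (t + t') i =
        Lam t i + Lam t' i - (1/2) * t * (∑ m, ∑ n, eps i m n * Ups t' m n)
          + t ^ 2 * Xi t' i) ∧
     (∀ t t' : ℝ, ∀ i j, Ups (t + t') i j =
        Ups t i j + Ups t' i j - 2 * t * ∑ l, eps i j l * Xi t' l) ∧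
     (∀ t t' : ℝ, ∀ i j, Sig (t + t') i j = Sig t i j + Sig t' i j - t * Om t' i j) ∧
     (∀ t t' : ℝ, ∀ i, Xi (t + t') i = Xi t i + Xi t' i) ∧
     (∀ t t' : ℝ, ∀ i j, Om (t + t') i j = Om t i j + Om t' i j) ∧
     (∀ t t' : ℝ, ∀ i, Piv (t + t') i = Piv t i + Piv t' i)) ↔
    (∃ p r s u w m : Fin 3 → ℝ, ∃ x y z : Fin 3 → Fin 3 → ℝ,
      ∀ t : ℝ,
        (∀ i, Psi t i = p i * t) ∧
        (∀ i, Phi t i = r i * t - (1/2) * s i * t ^ 2) ∧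
        (∀ i, Gam t i = s i * t) ∧
        (∀ i, Lam t i = u i * t - (1/4) * (∑ a, ∑ b, eps i a b * x a b) * t ^ 2
            + (1/3) * w i * t ^ 3) ∧
        (∀ i j, Ups t i j = x i j * t - (∑ l, eps i j l * w l) * t ^ 2) ∧
        (∀ i j, Sig t i j = y i j * t - (1/2) * z i j * t ^ 2) ∧
        (∀ i, Xi t i = w i * t) ∧
        (∀ i j, Om t i j = z i j * t) ∧
        (∀ i, Piv t i = m i * t)) := by
  constructor
  · rintro ⟨h1, h2, h3, h4, h5, h6, h7, h8, h9⟩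
    -- component continuity
    have cPsi : ∀ i, Continuous fun t => Psi t i := fun i => (continuous_apply i).comp hPsi
    have cPhi : ∀ i, Continuous fun t => Phi t i := fun i => (continuous_apply i).comp hPhi
    have cGam : ∀ i, Continuous fun t => Gam t i := fun i => (continuous_apply i).comp hGam
    have cLam : ∀ i, Continuous fun t => Lam t i := fun i => (continuous_apply i).comp hLam
    have cXi : ∀ i, Continuous fun t => Xi t i := fun i => (continuous_apply i).comp hXi
    have cPiv : ∀ i, Continuous fun t => Piv t i := fun i => (continuous_apply i).comp hPiv
    have cUps : ∀ i j, Continuous fun t => Ups t i j := fun i j =>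
      (continuous_apply j).comp ((continuous_apply i).comp hUps)
    have cSig : ∀ i j, Continuous fun t => Sig t i j := fun i j =>
      (continuous_apply j).comp ((continuous_apply i).comp hSig)
    have cOm : ∀ i j, Continuous fun t => Om t i j := fun i j =>
      (continuous_apply j).comp ((continuous_apply i).comp hOm)
    -- the purely additive ones
    have hPsiL : ∀ t i, Psi t i = Psi 1 i * t := fun t i =>
      cauchy_lin (cPsi i) (fun a b => h1 a b i) t
    have hGamL : ∀ t i, Gam t i = Gam 1 i * t := fun t i =>
      cauchy_lin (cGam i) (fun a b => h3 a b i) t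
    have hXiL : ∀ t i, Xi t i = Xi 1 i * t := fun t i =>
      cauchy_lin (cXi i) (fun a b => h7 a b i) t
    have hOmL : ∀ t i j, Om t i j = Om 1 i j * t := fun t i j =>
      cauchy_lin (cOm i j) (fun a b => h8 a b i j) t
    have hPivL : ∀ t i, Piv t i = Piv 1 i * t := fun t i =>
      cauchy_lin (cPiv i) (fun a b => h9 a b i) t
    -- Phi
    have hPhiL : ∀ t i, Phi t i =
        (Phi 1 i + (1/2) * Gam 1 i) * t - (1/2) * Gam 1 i * t ^ 2 := by
      intro t i
      have hadd : ∀ a b : ℝ,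
          (fun t => Phi t i + (1/2) * Gam 1 i * t ^ 2) (a + b) =
          (fun t => Phi t i + (1/2) * Gam 1 i * t ^ 2) a +
          (fun t => Phi t i + (1/2) * Gam 1 i * t ^ 2) b := by
        intro a b
        simp only [h2 a b i, hGamL b i]
        ring
      have hcont : Continuous fun t => Phi t i + (1/2) * Gam 1 i * t ^ 2 :=
        (cPhi i).add (continuous_const.mul (continuous_pow 2))
      have := cauchy_lin hcont hadd t
      nlinarith [this]
    -- Sigma
    have hSigL : ∀ t i j, Sig t i j =
        (Sig 1 i j + (1/2) * Om 1 i j) * t - (1/2) * Om 1 i j * t ^ 2 := by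
      intro t i j
      have hadd : ∀ a b : ℝ,
          (fun t => Sig t i j + (1/2) * Om 1 i j * t ^ 2) (a + b) =
          (fun t => Sig t i j + (1/2) * Om 1 i j * t ^ 2) a +
          (fun t => Sig t i j + (1/2) * Om 1 i j * t ^ 2) b := by
        intro a b
        simp only [h6 a b i j, hOmL b i j]
        ring
      have hcont : Continuous fun t => Sig t i j + (1/2) * Om 1 i j * t ^ 2 :=
        (cSig i j).add (continuous_const.mul (continuous_pow 2))
      have := cauchy_lin hcont hadd t
      nlinarith [this]
    -- Upsilon
    have hUpsL : ∀ t i j, Ups t i j =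
        (Ups 1 i j + ∑ l, eps i j l * Xi 1 l) * t
          - (∑ l, eps i j l * Xi 1 l) * t ^ 2 := by
      intro t i j
      have hsum : ∀ b : ℝ, (∑ l, eps i j l * Xi b l) = (∑ l, eps i j l * Xi 1 l) * b := by
        intro b
        simp only [Finset.sum_mul]
        exact Finset.sum_congr rfl fun l _ => by rw [hXiL b l]; ring
      have hadd : ∀ a b : ℝ,
          (fun t => Ups t i j + (∑ l, eps i j l * Xi 1 l) * t ^ 2) (a + b) =
          (fun t => Ups t i j + (∑ l, eps i j l * Xi 1 l) * t ^ 2) a +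
          (fun t => Ups t i j + (∑ l, eps i j l * Xi 1 l) * t ^ 2) b := by
        intro a b
        simp only [h5 a b i j, hsum b]
        ring
      have hcont : Continuous fun t => Ups t i j + (∑ l, eps i j l * Xi 1 l) * t ^ 2 :=
        (cUps i j).add (continuous_const.mul (continuous_pow 2))
      have := cauchy_lin hcont hadd t
      nlinarith [this]
    -- Lambda
    have hLamSum : ∀ (i : Fin 3) (b : ℝ),
        (∑ m, ∑ n, eps i m n * Ups b m n) =
          (∑ a, ∑ c, eps i a c * (Ups 1 a c + ∑ l, eps a c l * Xi 1 l)) * b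
            - 2 * Xi 1 i * b ^ 2 := by
      intro i b
      simp only [hUpsL b, Fin.sum_univ_three]
      fin_cases i <;> simp (config := { decide := true }) [eps] <;> ring
    have hLamL : ∀ t i, Lam t i =
        (Lam 1 i + (1/4) * (∑ a, ∑ c, eps i a c * (Ups 1 a c + ∑ l, eps a c l * Xi 1 l))
            - (1/3) * Xi 1 i) * t
          - (1/4) * (∑ a, ∑ c, eps i a c * (Ups 1 a c + ∑ l, eps a c l * Xi 1 l)) * t ^ 2
          + (1/3) * Xi 1 i * t ^ 3 := by
      intro t i
      set X : ℝ := ∑ a, ∑ c, eps i a c * (Ups 1 a c + ∑ l, eps a c l * Xi 1 l) with hXdef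
      have hadd : ∀ a b : ℝ,
          (fun t => Lam t i + (1/4) * X * t ^ 2 - (1/3) * Xi 1 i * t ^ 3) (a + b) =
          (fun t => Lam t i + (1/4) * X * t ^ 2 - (1/3) * Xi 1 i * t ^ 3) a +
          (fun t => Lam t i + (1/4) * X * t ^ 2 - (1/3) * Xi 1 i * t ^ 3) b := by
        intro a b
        have hs := hLamSum i b
        rw [← hXdef] at hs
        simp only [h4 a b i, hs, hXiL b i]
        ring
      have hcont : Continuous fun t =>
          Lam t i + (1/4) * X * t ^ 2 - (1/3) * Xi 1 i * t ^ 3 :=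
        ((cLam i).add (continuous_const.mul (continuous_pow 2))).sub
          (continuous_const.mul (continuous_pow 3))
      have := cauchy_lin hcont hadd t
      nlinarith [this]
    refine ⟨fun i => Psi 1 i, fun i => Phi 1 i + (1/2) * Gam 1 i, fun i => Gam 1 i,
      fun i => Lam 1 i
        + (1/4) * (∑ a, ∑ c, eps i a c * (Ups 1 a c + ∑ l, eps a c l * Xi 1 l))
        - (1/3) * Xi 1 i,
      fun i => Xi 1 i, fun i => Piv 1 i,
      fun i j => Ups 1 i j + ∑ l, eps i j l * Xi 1 l,
      fun i j => Sig 1 i j + (1/2) * Om 1 i j, fun i j => Om 1 i j, fun t =>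
      ⟨fun i => hPsiL t i, fun i => hPhiL t i, fun i => hGamL t i,
       fun i => hLamL t i, fun i j => hUpsL t i j, fun i j => hSigL t i j,
       fun i => hXiL t i, fun i j => hOmL t i j, fun i => hPivL t i⟩⟩
  · rintro ⟨p, r, s, u, w, m, x, y, z, h⟩
    refine ⟨fun t t' i => ?_, fun t t' i => ?_, fun t t' i => ?_, fun t t' i => ?_,
      fun t t' i j => ?_, fun t t' i j => ?_, fun t t' i => ?_, fun t t' i j => ?_,
      fun t t' i => ?_⟩
    · rw [(h (t + t')).1 i, (h t).1 i, (h t').1 i]; ring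
    · rw [(h (t + t')).2.1 i, (h t).2.1 i, (h t').2.1 i, (h t').2.2.1 i]; ring
    · rw [(h (t + t')).2.2.1 i, (h t).2.2.1 i, (h t').2.2.1 i]; ring
    · rw [(h (t + t')).2.2.2.1 i, (h t).2.2.2.1 i, (h t').2.2.2.1 i,
        (h t').2.2.2.2.2.2.1 i]
      simp only [(h t').2.2.2.2.1, Fin.sum_univ_three]
      fin_cases i <;> simp (config := { decide := true }) [eps] <;> ring
    · rw [(h (t + t')).2.2.2.2.1 i j, (h t).2.2.2.2.1 i j, (h t').2.2.2.2.1 i j]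
      simp only [(h t').2.2.2.2.2.2.1, Fin.sum_univ_three]
      ring
    · rw [(h (t + t')).2.2.2.2.2.1 i j, (h t).2.2.2.2.2.1 i j,
        (h t').2.2.2.2.2.1 i j, (h t').2.2.2.2.2.2.2.1 i j]; ring
    · rw [(h (t + t')).2.2.2.2.2.2.1 i, (h t).2.2.2.2.2.2.1 i,
        (h t').2.2.2.2.2.2.1 i]; ring
    · rw [(h (t + t')).2.2.2.2.2.2.2.1 i j, (h t).2.2.2.2.2.2.2.1 i j,
        (h t').2.2.2.2.2.2.2.1 i j]; ring
    · rw [(h (t + t')).2.2.2.2.2.2.2.2 i, (h t).2.2.2.2.2.2.2.2 i,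
        (h t').2.2.2.2.2.2.2.2 i]; ring
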